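/- If Γ₁ and Γ₂ are two distinct rectifiable arcs in a metric space X with the same pair of endpoints, then there exists an injective Lipschitz map α:S¹→X. -/

import Mathlib

open Set Metric
open scoped ENNReal NNReal

/-- A curve from `x` to `y` parameterized on `[0,1]`. -/
def IsCurveOn {X : Type*} [PseudoEMetricSpace X] (γ : ℝ → X) (x y : X) : Prop :=
  ContinuousOn γ (Set.Icc 0 1) ∧ γ 0 = x ∧ γ 1 = y

/-- `A` is a rectifiable arc with endpoints `x` and `y`: the homeomorphic image of `[0,1]`
(parameterized by an injective continuous curve) of finite length. -/
def IsRectArc {X : Type*} [PseudoEMetricSpace X] (A : Set X) (x y : X) : Prop :=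
  ∃ γ : ℝ → X, IsCurveOn γ x y ∧ Set.InjOn γ (Set.Icc 0 1) ∧
    γ '' Set.Icc 0 1 = A ∧ eVariationOn γ (Set.Icc 0 1) ≠ ⊤

/-- The unit circle `S¹ ⊂ ℝ²` with its induced metric. -/
abbrev Circle' : Type := ↥(Metric.sphere (0 : EuclideanSpace ℝ (Fin 2)) 1)

/-! If `Γ₂ ⊄ Γ₁`, follow `Γ₂` backwards and forwards from a point outside `Γ₁` until it first
meets `Γ₁` again. This sub-arc of `Γ₂`, together with the sub-arc of `Γ₁` joining the same two
points, is a rectifiable simple closed curve. Its arc-length parametrization is a 1-Lipschitz loop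
`g` on `[0, L]`, injective on `(0, L]`, and `z ↦ g (L (arg z + π) / 2π)` is injective and
Lipschitz on the circle because the chord `‖z - w‖` is at least `2 / π` times the shorter arc
between `z` and `w`. -/

theorem LocallyBoundedVariationOn.continuousOn_variationOnFromTo {α E : Type*} [LinearOrder α]
    [TopologicalSpace α] [OrderTopology α] [PseudoMetricSpace E] {f : α → E} {s : Set α}
    (hf : LocallyBoundedVariationOn f s) (hc : ContinuousOn f s) {a : α} (ha : a ∈ s) :
    ContinuousOn (variationOnFromTo f s a) s := by
  intro b hb
  have hleft := variationOnFromTo.tendsto_left ha hb hf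
    ((hc b hb).mono_left (nhdsWithin_mono _ inter_subset_left))
  have hright := variationOnFromTo.tendsto_right ha hb hf
    ((hc b hb).mono_left (nhdsWithin_mono _ inter_subset_left))
  rw [dist_self, sub_zero] at hleft
  rw [dist_self, add_zero] at hright
  rw [← continuousWithinAt_sdiff_self, show s \ {b} = s ∩ Iio b ∪ s ∩ Ioi b by
    rw [← inter_union_distrib_left, Iio_union_Ioi, sdiff_eq]]
  exact ContinuousWithinAt.union hleft hright

theorem HasConstantSpeedOnWith.lipschitzOnWith {E : Type*} [PseudoEMetricSpace E] {f : ℝ → E}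
    {s : Set ℝ} {l : ℝ≥0} (h : HasConstantSpeedOnWith f s l) : LipschitzOnWith l f s := by
  have key : ∀ x ∈ s, ∀ y ∈ s, x ≤ y → edist (f x) (f y) ≤ l * edist x y := fun x hx y hy hxy =>
    calc edist (f x) (f y) ≤ eVariationOn f (s ∩ Icc x y) :=
          eVariationOn.edist_le f ⟨hx, le_rfl, hxy⟩ ⟨hy, hxy, le_rfl⟩
      _ = l * edist x y := by
          rw [h hx hy, ENNReal.ofReal_mul l.coe_nonneg, ENNReal.ofReal_coe_nnreal,
            edist_comm, edist_dist, Real.dist_eq, abs_of_nonneg (sub_nonneg.2 hxy)]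
  intro x hx y hy
  rcases le_total x y with hxy | hyx
  · exact key x hx y hy hxy
  · rw [edist_comm, edist_comm x]
    exact key y hy x hx hyx

theorem BoundedVariationOn.exists_lipschitzOnWith_one_reparam {E : Type*} [MetricSpace E]
    {c : ℝ → E} {a b : ℝ} (hab : a < b) (hc : ContinuousOn c (Icc a b))
    (hbv : BoundedVariationOn c (Icc a b)) (hinj : InjOn c (Ioc a b)) :
    ∃ L > 0, ∃ g : ℝ → E, LipschitzOnWith 1 g (Icc 0 L) ∧ g 0 = c a ∧ g L = c b ∧
      InjOn g (Ioc 0 L) := by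
  have hlbv := hbv.locallyBoundedVariationOn
  have ha : a ∈ Icc a b := left_mem_Icc.2 hab.le
  have hb : b ∈ Icc a b := right_mem_Icc.2 hab.le
  set φ := variationOnFromTo c (Icc a b) a
  set g := naturalParameterization c (Icc a b) a
  have hgφ : ∀ t ∈ Icc a b, g (φ t) = c t := fun t ht =>
    edist_eq_zero.1 (edist_naturalParameterization_eq_zero hlbv ha ht)
  have hφa : φ a = 0 := variationOnFromTo.self _ _ _
  have hφsurj : Icc 0 (φ b) ⊆ φ '' Icc a b :=
    hφa ▸ intermediate_value_Icc hab.le (hlbv.continuousOn_variationOnFromTo hc ha)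
  have hφpos : ∀ t ∈ Ioc a b, 0 < φ t := fun t ht => by
    refine (variationOnFromTo.nonneg_of_le _ _ ht.1.le).lt_of_ne fun h => ?_
    have hmid : (a + t) / 2 ∈ Icc a b ∩ uIcc a t := by
      rw [uIcc_of_le ht.1.le]
      exact ⟨⟨by linarith [ht.1], by linarith [ht.2]⟩, by linarith [ht.1], by linarith [ht.1]⟩
    have := (variationOnFromTo.eq_zero_iff hlbv ha (Ioc_subset_Icc_self ht)).1 h.symm
      ⟨Ioc_subset_Icc_self ht, right_mem_uIcc⟩ hmid
    have := hinj ht ⟨by linarith [ht.1], by linarith [ht.2]⟩ (edist_eq_zero.1 this)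
    linarith [ht.1]
  refine ⟨φ b, hφpos b (right_mem_Ioc.2 hab), g,
    (has_unit_speed_naturalParameterization c hlbv ha).lipschitzOnWith.mono hφsurj,
    by rw [← hφa, hgφ a ha], hgφ b hb, ?_⟩
  have hmem : ∀ t ∈ Icc a b, 0 < φ t → t ∈ Ioc a b := fun t ht hpos =>
    ⟨ht.1.lt_of_ne (by rintro rfl; exact hpos.ne' hφa), ht.2⟩
  rintro _ hw₁ _ hw₂ h
  obtain ⟨t₁, ht₁, rfl⟩ := hφsurj (Ioc_subset_Icc_self hw₁)
  obtain ⟨t₂, ht₂, rfl⟩ := hφsurj (Ioc_subset_Icc_self hw₂)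
  rw [hgφ t₁ ht₁, hgφ t₂ ht₂] at h
  rw [hinj (hmem t₁ ht₁ hw₁.1) (hmem t₂ ht₂ hw₂.1) h]

theorem LipschitzOnWith.dist_le_mul_min_of_eq_endpoints {X : Type*} [PseudoMetricSpace X]
    {g : ℝ → X} {K : ℝ≥0} {a b : ℝ} (hg : LipschitzOnWith K g (Icc a b)) (hloop : g a = g b)
    {s t : ℝ} (hs : s ∈ Icc a b) (ht : t ∈ Icc a b) :
    dist (g s) (g t) ≤ K * min |s - t| (b - a - |s - t|) := by
  rw [mul_min_of_nonneg _ _ K.coe_nonneg]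
  refine le_min (by simpa [Real.dist_eq] using hg.dist_le_mul s hs t ht) ?_
  wlog hst : s ≤ t generalizing s t
  · rw [dist_comm, abs_sub_comm]
    exact this ht hs (le_of_not_ge hst)
  have ha : a ∈ Icc a b := left_mem_Icc.2 (hs.1.trans hs.2)
  have hb : b ∈ Icc a b := right_mem_Icc.2 (hs.1.trans hs.2)
  calc dist (g s) (g t) ≤ dist (g s) (g a) + dist (g b) (g t) := hloop ▸ dist_triangle _ _ _
    _ ≤ K * dist s a + K * dist b t :=
        add_le_add (hg.dist_le_mul s hs a ha) (hg.dist_le_mul b hb t ht)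
    _ = K * (b - a - |s - t|) := by
        rw [Real.dist_eq, Real.dist_eq, abs_of_nonneg (sub_nonneg.2 hs.1),
          abs_of_nonneg (sub_nonneg.2 ht.2), abs_of_nonpos (sub_nonpos.2 hst)]
        ring

open Real in
theorem Complex.min_abs_arg_sub_le_pi_div_two_mul_norm_sub {z w : ℂ} (hz : ‖z‖ = 1) (hw : ‖w‖ = 1) :
    min |arg z - arg w| (2 * π - |arg z - arg w|) ≤ π / 2 * ‖z - w‖ := by
  wlog hzw : arg w ≤ arg z generalizing z w
  · rw [abs_sub_comm, norm_sub_rev]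
    exact this hw hz (le_of_not_ge hzw)
  set d := arg z - arg w
  have hd2π : d ≤ 2 * π := by
    linarith [neg_pi_lt_arg w, arg_le_pi z]
  have hnorm : ‖z - w‖ = 2 * Real.sin (d / 2) := by
    have hexp : ∀ u : ℂ, ‖u‖ = 1 → u = exp (arg u * I) := fun u hu => by
      simpa [hu] using (norm_mul_exp_arg_mul_I u).symm
    rw [hexp z hz, hexp w hw, show (arg z : ℂ) * I = arg w * I + I * d by push_cast [d]; ring,
      exp_add, ← mul_sub_one, norm_mul, norm_exp_ofReal_mul_I, one_mul,
      norm_exp_I_mul_ofReal_sub_one, norm_mul, Real.norm_two, Real.norm_eq_abs,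
      abs_of_nonneg (Real.sin_nonneg_of_nonneg_of_le_pi (by linarith) (by linarith))]
  rw [abs_of_nonneg (sub_nonneg.2 hzw), hnorm]
  set m := min d (2 * π - d)
  have hm : 0 ≤ m ∧ m ≤ π := by
    refine ⟨le_min (by linarith) (by linarith), ?_⟩
    rcases le_total d π with h | h
    · exact (min_le_left _ _).trans h
    · exact (min_le_right _ _).trans (by linarith)
  have hsin : Real.sin (d / 2) = Real.sin (m / 2) := by
    rcases min_cases d (2 * π - d) with ⟨h, -⟩ | ⟨h, -⟩
    · rw [show m = d from h]
    · rw [show m = 2 * π - d from h, show (2 * π - d) / 2 = π - d / 2 by ring, Real.sin_pi_sub]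
  have := Real.mul_le_sin (x := m / 2) (by linarith) (by linarith)
  rw [hsin]
  calc m = π * (2 / π * (m / 2)) := by field_simp
    _ ≤ π * Real.sin (m / 2) := by gcongr
    _ = π / 2 * (2 * Real.sin (m / 2)) := by ring

open Real in
theorem exists_injective_lipschitz_circle_of_lipschitzOnWith {X : Type*} [PseudoMetricSpace X]
    {g : ℝ → X} {K : ℝ≥0} {L : ℝ} (hL : 0 < L) (hg : LipschitzOnWith K g (Icc 0 L))
    (hloop : g 0 = g L) (hinj : InjOn g (Ioc 0 L)) :
    ∃ (K' : ℝ≥0) (α : Circle' → X), Function.Injective α ∧ LipschitzWith K' α := by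
  let e := Complex.orthonormalBasisOneI.repr.symm
  have he : ∀ z : Circle', ‖e z‖ = 1 := fun z => by
    rw [e.norm_map]; exact mem_sphere_zero_iff_norm.1 z.2
  let θ : Circle' → ℝ := fun z => Complex.arg (e z)
  let τ : Circle' → ℝ := fun z => L / (2 * π) * (θ z + π)
  have hτ : ∀ z, τ z ∈ Ioc 0 L := fun z => by
    have h₁ := Complex.neg_pi_lt_arg (e z)
    have h₂ := Complex.arg_le_pi (e z)
    constructor
    · exact mul_pos (by positivity) (by linarith)
    · calc L / (2 * π) * (θ z + π) ≤ L / (2 * π) * (2 * π) := by gcongr; linarith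
        _ = L := by field_simp
  refine ⟨K * (L / 4).toNNReal, g ∘ τ, fun z w h => ?_, LipschitzWith.of_dist_le_mul fun z w => ?_⟩
  · have hθ : θ z = θ w := by
      have := hinj (hτ z) (hτ w) h
      simpa [τ, hL.ne', pi_ne_zero] using this
    exact Subtype.ext (e.injective (Complex.ext_norm_arg ((he z).trans (he w).symm) hθ))
  · have hdist : |τ z - τ w| = L / (2 * π) * |θ z - θ w| := by
      rw [← abs_of_pos (show 0 < L / (2 * π) by positivity), ← abs_mul]
      congr 1
      ring
    calc dist (g (τ z)) (g (τ w)) ≤ K * min |τ z - τ w| (L - 0 - |τ z - τ w|) :=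
          hg.dist_le_mul_min_of_eq_endpoints hloop (Ioc_subset_Icc_self (hτ z))
            (Ioc_subset_Icc_self (hτ w))
      _ = K * (L / (2 * π) * min |θ z - θ w| (2 * π - |θ z - θ w|)) := by
          rw [hdist, show L - 0 - L / (2 * π) * |θ z - θ w|
              = L / (2 * π) * (2 * π - |θ z - θ w|) by field_simp; ring,
            ← mul_min_of_nonneg _ _ (by positivity)]
      _ ≤ K * (L / (2 * π) * (π / 2 * ‖e z - e w‖)) := by
          gcongr
          exact Complex.min_abs_arg_sub_le_pi_div_two_mul_norm_sub (he z) (he w)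
      _ = ↑(K * (L / 4).toNNReal) * dist z w := by
          rw [Subtype.dist_eq, ← e.dist_map, dist_eq_norm, NNReal.coe_mul,
            Real.coe_toNNReal _ (by positivity)]
          field_simp
          ring

theorem exists_injective_lipschitz_circle_of_boundedVariationOn {X : Type*} [MetricSpace X]
    {c : ℝ → X} {a b : ℝ} (hab : a < b) (hc : ContinuousOn c (Icc a b))
    (hbv : BoundedVariationOn c (Icc a b)) (hloop : c a = c b) (hinj : InjOn c (Ioc a b)) :
    ∃ (K : ℝ≥0) (α : Circle' → X), Function.Injective α ∧ LipschitzWith K α := by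
  obtain ⟨L, hL, g, hg, hg0, hgL, hginj⟩ := hbv.exists_lipschitzOnWith_one_reparam hab hc hinj
  exact exists_injective_lipschitz_circle_of_lipschitzOnWith hL hg (by rw [hg0, hgL, hloop]) hginj

theorem exists_injective_lipschitz_circle_of_isRectArc {X : Type*} [MetricSpace X] {A B : Set X}
    {P Q : X} (hA : IsRectArc A P Q) (hB : IsRectArc B P Q) (hAB : A ∩ B ⊆ {P, Q}) :
    ∃ (K : ℝ≥0) (α : Circle' → X), Function.Injective α ∧ LipschitzWith K α := by
  obtain ⟨γ, ⟨hγc, hγ0, hγ1⟩, hγi, rfl, hγv⟩ := hA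
  obtain ⟨δ, ⟨hδc, hδ0, hδ1⟩, hδi, rfl, hδv⟩ := hB
  set c : ℝ → X := fun t => if 0 ≤ t then γ t else δ (-t)
  have hcγ : EqOn c γ (Icc 0 1) := fun t ht => if_pos ht.1
  have hcδ : EqOn c (δ ∘ Neg.neg) (Icc (-1) 0) := fun t ht => by
    rcases ht.2.lt_or_eq with h | rfl
    · exact if_neg h.not_ge
    · simp [c, hγ0, hδ0]
  have hneg : MapsTo Neg.neg (Icc (-1 : ℝ) 0) (Icc 0 1) := fun t ht =>
    ⟨by linarith [ht.2], by linarith [ht.1]⟩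
  have hdisj : ∀ s ∈ Icc (0 : ℝ) 1, ∀ t ∈ Ioo (0 : ℝ) 1, γ s ≠ δ t := by
    rintro s hs t ht h
    rcases hAB ⟨⟨s, hs, h⟩, t, Ioo_subset_Icc_self ht, rfl⟩ with hP | hQ
    · exact ht.1.ne' (hδi (Ioo_subset_Icc_self ht) (left_mem_Icc.2 zero_le_one) (hP.trans hδ0.symm))
    · exact ht.2.ne (hδi (Ioo_subset_Icc_self ht) (right_mem_Icc.2 zero_le_one) (hQ.trans hδ1.symm))
  refine exists_injective_lipschitz_circle_of_boundedVariationOn (c := c) (a := -1) (b := 1)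
    (by norm_num) ?_ ?_ ?_ ?_
  · rw [← Icc_union_Icc_eq_Icc (by norm_num : (-1 : ℝ) ≤ 0) zero_le_one]
    exact ((hδc.comp continuous_neg.continuousOn hneg).congr hcδ).union_of_isClosed
      (hγc.congr hcγ) isClosed_Icc isClosed_Icc
  · have hsplit := eVariationOn.Icc_add_Icc c (s := univ) (by norm_num : (-1 : ℝ) ≤ 0) zero_le_one
      (mem_univ 0)
    rw [univ_inter, univ_inter, univ_inter] at hsplit
    rw [BoundedVariationOn, ← hsplit, eVariationOn.eq_of_eqOn hcδ, eVariationOn.eq_of_eqOn hcγ,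
      eVariationOn.comp_eq_of_antitoneOn _ _ fun _ _ _ _ h => neg_le_neg h, image_neg_Icc, neg_zero,
      neg_neg]
    exact ENNReal.add_ne_top.2 ⟨hδv, hγv⟩
  · simp [c, hγ1, hδ1]
  · intro s hs t ht hst
    rcases le_or_gt 0 s with hs0 | hs0 <;> rcases le_or_gt 0 t with ht0 | ht0 <;>
      simp only [c, if_pos, hs0, ht0, not_le.2] at hst
    · exact hγi ⟨hs0, hs.2⟩ ⟨ht0, ht.2⟩ hst
    · exact absurd hst (hdisj s ⟨hs0, hs.2⟩ (-t) ⟨by linarith, by linarith [ht.1]⟩)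
    · exact absurd hst.symm (hdisj t ⟨ht0, ht.2⟩ (-s) ⟨by linarith, by linarith [hs.1]⟩)
    · exact neg_injective
        (hδi ⟨by linarith, by linarith [hs.1]⟩ ⟨by linarith, by linarith [ht.1]⟩ hst)

theorem IsClosed.exists_Ioo_disjoint_of_notMem {S : Set ℝ} (hS : IsClosed S) {a b t : ℝ}
    (ha : a ∈ S) (hb : b ∈ S) (hat : a ≤ t) (htb : t ≤ b) (ht : t ∉ S) :
    ∃ a' ∈ S, ∃ b' ∈ S, a' < b' ∧ Disjoint (Ioo a' b') S := by
  have hbdd : BddAbove (S ∩ Icc a t) := bddAbove_Icc.mono inter_subset_right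
  have hbdd' : BddBelow (S ∩ Icc t b) := bddBelow_Icc.mono inter_subset_right
  have hl := (hS.inter isClosed_Icc).csSup_mem ⟨a, ha, le_rfl, hat⟩ hbdd
  have hr := (hS.inter isClosed_Icc).csInf_mem ⟨b, hb, htb, le_rfl⟩ hbdd'
  have hlt : sSup (S ∩ Icc a t) < t := hl.2.2.lt_of_ne fun h => ht (h ▸ hl.1)
  have hgt : t < sInf (S ∩ Icc t b) := hr.2.1.lt_of_ne' fun h => ht (h ▸ hr.1)
  refine ⟨_, hl.1, _, hr.1, hlt.trans hgt, disjoint_left.2 fun x hx hxS => ?_⟩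
  rcases le_total x t with hxt | htx
  · exact hx.1.not_ge (le_csSup hbdd ⟨hxS, hl.2.1.trans hx.1.le, hxt⟩)
  · exact hx.2.not_ge (csInf_le hbdd' ⟨hxS, htx, hx.2.le.trans hr.2.2⟩)

theorem isRectArc_image_uIcc {X : Type*} [PseudoEMetricSpace X] {γ : ℝ → X} {u v : ℝ}
    (huv : u ≠ v) (hc : ContinuousOn γ (uIcc u v)) (hinj : InjOn γ (uIcc u v))
    (hbv : BoundedVariationOn γ (uIcc u v)) : IsRectArc (γ '' uIcc u v) (γ u) (γ v) := by
  set ℓ := AffineMap.lineMap (k := ℝ) u v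
  have hℓ : ℓ '' Icc 0 1 = uIcc u v := by rw [← segment_eq_image_lineMap, segment_eq_uIcc]
  have hmaps : MapsTo ℓ (Icc 0 1) (uIcc u v) := hℓ ▸ mapsTo_image _ _
  refine ⟨γ ∘ ℓ, ⟨hc.comp AffineMap.lineMap_continuous.continuousOn hmaps, by simp [ℓ],
    by simp [ℓ]⟩, hinj.comp (AffineMap.lineMap_injective ℝ huv).injOn hmaps,
    by rw [image_comp, hℓ], ?_⟩
  rcases huv.lt_or_gt with h | h
  · rw [eVariationOn.comp_eq_of_monotoneOn _ _ ((AffineMap.lineMap_mono h.le).monotoneOn _), hℓ]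
    exact hbv
  · rw [eVariationOn.comp_eq_of_antitoneOn _ _ ((AffineMap.lineMap_anti h.le).antitoneOn _), hℓ]
    exact hbv

theorem IsRectArc.exists_isRectArc_inter_subset {X : Type*} [MetricSpace X] {x y : X}
    {Γ₁ Γ₂ : Set X} (h₁ : IsRectArc Γ₁ x y) (h₂ : IsRectArc Γ₂ x y) (hsub : ¬Γ₂ ⊆ Γ₁) :
    ∃ (P Q : X) (A B : Set X), IsRectArc A P Q ∧ IsRectArc B P Q ∧ A ∩ B ⊆ {P, Q} := by
  obtain ⟨γ, ⟨hγc, hγ0, hγ1⟩, hγi, rfl, hγv⟩ := h₁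
  obtain ⟨δ, ⟨hδc, hδ0, hδ1⟩, hδi, rfl, hδv⟩ := h₂
  obtain ⟨_, ⟨t, ht, rfl⟩, htΓ⟩ := not_subset.1 hsub
  set S := Icc 0 1 ∩ δ ⁻¹' (γ '' Icc 0 1)
  have hS : IsClosed S := hδc.preimage_isClosed_of_isClosed isClosed_Icc
    (isCompact_Icc.image_of_continuousOn hγc).isClosed
  have h0 : (0 : ℝ) ∈ S :=
    ⟨left_mem_Icc.2 zero_le_one, 0, left_mem_Icc.2 zero_le_one, hγ0.trans hδ0.symm⟩
  have h1 : (1 : ℝ) ∈ S :=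
    ⟨right_mem_Icc.2 zero_le_one, 1, right_mem_Icc.2 zero_le_one, hγ1.trans hδ1.symm⟩
  obtain ⟨a, ⟨ha, u, hu, hua⟩, b, ⟨hb, v, hv, hvb⟩, hab, hdisj⟩ :=
    hS.exists_Ioo_disjoint_of_notMem h0 h1 ht.1 ht.2 fun h => htΓ h.2
  have huv : u ≠ v := by
    rintro rfl
    exact hab.ne (hδi ha hb (hua.symm.trans hvb))
  have hsub₁ : uIcc u v ⊆ Icc 0 1 := uIcc_subset_Icc hu hv
  have hsub₂ : uIcc a b ⊆ Icc 0 1 := uIcc_subset_Icc ha hb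
  refine ⟨δ a, δ b, γ '' uIcc u v, δ '' uIcc a b, hua ▸ hvb ▸ isRectArc_image_uIcc huv
    (hγc.mono hsub₁) (hγi.mono hsub₁) (BoundedVariationOn.mono hγv hsub₁),
    isRectArc_image_uIcc hab.ne (hδc.mono hsub₂) (hδi.mono hsub₂)
      (BoundedVariationOn.mono hδv hsub₂), ?_⟩
  rintro _ ⟨hA, s, hs, rfl⟩
  rw [uIcc_of_le hab.le] at hs
  rcases eq_endpoints_or_mem_Ioo_of_mem_Icc hs with rfl | rfl | hs'
  · exact Or.inl rfl
  · exact Or.inr rfl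
  · exact absurd ⟨hsub₂ (Icc_subset_uIcc hs), image_mono hsub₁ hA⟩ (disjoint_left.1 hdisj hs')

/-- If `Γ₁ ≠ Γ₂` are rectifiable arcs connecting the same endpoints, then there is a
one-to-one Lipschitz map `α : S¹ → X`. -/
theorem exists_injective_lipschitz_circle {X : Type*} [MetricSpace X] (x y : X)
    (Γ₁ Γ₂ : Set X) (h₁ : IsRectArc Γ₁ x y) (h₂ : IsRectArc Γ₂ x y) (hne : Γ₁ ≠ Γ₂) :
    ∃ (K : ℝ≥0) (α : Circle' → X), Function.Injective α ∧ LipschitzWith K α := by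
  obtain ⟨P, Q, A, B, hA, hB, hAB⟩ : ∃ (P Q : X) (A B : Set X),
      IsRectArc A P Q ∧ IsRectArc B P Q ∧ A ∩ B ⊆ {P, Q} := by
    by_cases h : Γ₂ ⊆ Γ₁
    · exact h₂.exists_isRectArc_inter_subset h₁ fun h' => hne (h'.antisymm h)
    · exact h₁.exists_isRectArc_inter_subset h₂ h
  exact exists_injective_lipschitz_circle_of_isRectArc hA hB hAB
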